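/- arXiv:0905.2283 — 6 statements merged into one kernel-verified Lean document; each statement's English description precedes it below -/
import Mathlib

section
/- Let K be a k-algebra with conjugation that is weakly distributive and contains a nonzero imaginary element (an element b with b + b̄ = 0). If a ∈ K satisfies n(a) = ā a = 1, then there exists a nonzero b ∈ K with b̄ a = b. -/
/-- A `k`-algebra with conjugation: a left `k`-vector space `K` with a
(not necessarily distributive or associative) multiplication and identity,
where `k` sits centrally (encoded via scalar compatibility), together with a
self-inverse `k`-linear conjugation fixing `k`. -/
structure ConjAlg (k : Type*) [Field k] (K : Type*) [AddCommGroup K] [Module k K] where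
  mul : K → K → K
  one : K
  one_mul : ∀ x, mul one x = x
  mul_one : ∀ x, mul x one = x
  smul_mul : ∀ (c : k) (x y : K), mul (c • x) y = c • mul x y
  mul_smul : ∀ (c : k) (x y : K), mul x (c • y) = c • mul x y
  conj : K →ₗ[k] K
  conj_conj : ∀ x, conj (conj x) = x
  conj_one : conj one = one

namespace ConjAlg

variable {k : Type*} [Field k] {K : Type*} [AddCommGroup K] [Module k K]

/-- The norm `n(a) = ā a`. -/
def n (A : ConjAlg k K) (x : K) : K := A.mul (A.conj x) x

/-- The trace `t(a) = a + ā`. -/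
def t (A : ConjAlg k K) (x : K) : K := x + A.conj x

/-- Membership in (the copy of) `k` inside `K`. -/
def InK (A : ConjAlg k K) (x : K) : Prop := ∃ c : k, x = c • A.one

/-- Weak right distributivity: `(a+b)c = ac + bc` whenever `a ∈ k`. -/
def WeakRightDistrib (A : ConjAlg k K) : Prop :=
  ∀ (c : k) (b y : K), A.mul (c • A.one + b) y = A.mul (c • A.one) y + A.mul b y

/-- Weak left distributivity: `c(a+b) = ca + cb` whenever `a ∈ k`. -/
def WeakLeftDistrib (A : ConjAlg k K) : Prop :=
  ∀ (c : k) (b y : K), A.mul y (c • A.one + b) = A.mul y (c • A.one) + A.mul y b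

/-- Full left distributivity. -/
def LeftDistrib (A : ConjAlg k K) : Prop :=
  ∀ x y z : K, A.mul x (y + z) = A.mul x y + A.mul x z

/-- Full right distributivity. -/
def RightDistrib (A : ConjAlg k K) : Prop :=
  ∀ x y z : K, A.mul (x + y) z = A.mul x z + A.mul y z

/-- Left alternativity: `a(ab) = a²b`. -/
def LeftAlt (A : ConjAlg k K) : Prop :=
  ∀ a b : K, A.mul a (A.mul a b) = A.mul (A.mul a a) b

/-- The trace is `k`-valued. -/
def TraceKValued (A : ConjAlg k K) : Prop := ∀ x : K, A.InK (A.t x)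

/-- The norm is `k`-valued. -/
def NormKValued (A : ConjAlg k K) : Prop := ∀ x : K, A.InK (A.n x)

/-- The norm is anisotropic. -/
def Anisotropic (A : ConjAlg k K) : Prop := ∀ x : K, x ≠ 0 → A.n x ≠ 0

/-- The norm is symmetric: `n(ā) = n(a)`. -/
def NormSymmetric (A : ConjAlg k K) : Prop := ∀ x : K, A.n (A.conj x) = A.n x

end ConjAlg

/-!
If `a = -1`, any nonzero imaginary `b` works, since `b̄ (-1) = -b̄ = b`. Otherwise `b = 1 + a` is
nonzero, and weak distributivity gives `(1 + ā) a = a + ā a = a + 1`.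
-/

namespace ConjAlg

variable {k : Type*} [Field k] {K : Type*} [AddCommGroup K] [Module k K] (A : ConjAlg k K)

theorem conj_eq_neg_of_t_eq_zero {b : K} (hb : A.t b = 0) : A.conj b = -b :=
  eq_neg_of_add_eq_zero_right hb

theorem mul_neg_one (x : K) : A.mul x (-A.one) = -x := by
  rw [← neg_one_smul k A.one, A.mul_smul, A.mul_one, neg_one_smul]

theorem mul_conj_one_add_self (hwr : A.WeakRightDistrib) (a : K) :
    A.mul (A.conj (A.one + a)) a = a + A.n a := by
  rw [map_add, A.conj_one, ← one_smul k A.one, hwr, A.smul_mul, A.one_mul, one_smul]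
  rfl

end ConjAlg

theorem stmt0_general {k : Type*} [Field k] {K : Type*} [AddCommGroup K] [Module k K] (A : ConjAlg k K)
    (hwr : A.WeakRightDistrib)
    (him : ∃ b : K, b ≠ 0 ∧ A.t b = 0)
    (a : K) (ha : A.n a = A.one) :
    ∃ b : K, b ≠ 0 ∧ A.mul (A.conj b) a = b := by
  by_cases hneg : a = -A.one
  · obtain ⟨b, hb0, hbt⟩ := him
    refine ⟨b, hb0, ?_⟩
    rw [hneg, A.mul_neg_one, A.conj_eq_neg_of_t_eq_zero hbt, neg_neg]
  · refine ⟨A.one + a, fun h => hneg (eq_neg_of_add_eq_zero_right h), ?_⟩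
    rw [A.mul_conj_one_add_self hwr, ha, add_comm]

theorem stmt0 {k : Type*} [Field k] {K : Type*} [AddCommGroup K] [Module k K] (A : ConjAlg k K)
    (hwr : A.WeakRightDistrib) (hwl : A.WeakLeftDistrib)
    (him : ∃ b : K, b ≠ 0 ∧ A.t b = 0)
    (a : K) (ha : A.n a = A.one) :
    ∃ b : K, b ≠ 0 ∧ A.mul (A.conj b) a = b :=
  stmt0_general A hwr him a ha
end

section
/- Let K be a weakly right distributive left alternative k-algebra with conjugation whose trace and norm are k-valued, and suppose the norm is anisotropic (n(a) ≠ 0 for a ≠ 0) and symmetric (n(ā) = n(a)). Then K is a division algebra: every nonzero a ∈ K has a unique two-sided multiplicative inverse, namely a⁻¹ = ā·n(a)⁻¹. -/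
/-! The norm and trace pin `a` down as a root of `X² - t(a) X + n(a)` with `k`-coefficients;
feeding `ab = 1` through left alternativity, `a = a(ab) = a²b = t(a) - n(a) b`, forces
`b = n(a)⁻¹ (t(a) - a) = n(a)⁻¹ ā`. -/

namespace ConjAlg

variable {k : Type*} [Field k] {K : Type*} [AddCommGroup K] [Module k K] {A : ConjAlg k K}

theorem smul_one_mul (c : k) (y : K) : A.mul (c • A.one) y = c • y := by
  rw [A.smul_mul, A.one_mul]

theorem mul_conj_eq_n (hsym : A.NormSymmetric) (x : K) : A.mul x (A.conj x) = A.n x := by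
  simpa only [n, A.conj_conj] using hsym x

theorem conj_eq_sub_of_t_eq {x : K} {s : k} (hs : A.t x = s • A.one) :
    A.conj x = s • A.one - x :=
  eq_sub_of_add_eq' hs

theorem WeakRightDistrib.mul_smul_one_add (hwr : A.WeakRightDistrib) (c : k) (b y : K) :
    A.mul (c • A.one + b) y = c • y + A.mul b y := by
  rw [hwr, smul_one_mul]

theorem WeakRightDistrib.mul_smul_one_sub (hwr : A.WeakRightDistrib) (c : k) (b y : K) :
    A.mul (c • A.one - b) y = c • y - A.mul b y := by
  rw [sub_eq_add_neg, ← neg_one_smul k b, hwr.mul_smul_one_add, A.smul_mul, neg_one_smul,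
    ← sub_eq_add_neg]

theorem WeakRightDistrib.mul_self_eq {x : K} {s c : k} (hwr : A.WeakRightDistrib)
    (hs : A.t x = s • A.one) (hc : A.n x = c • A.one) :
    A.mul x x = s • x - c • A.one := by
  have h : c • A.one = s • x - A.mul x x := by
    rw [← hc, n, conj_eq_sub_of_t_eq hs, hwr.mul_smul_one_sub]
  rw [h, sub_sub_cancel]

theorem smul_eq_conj_of_mul_eq_one {a b : K} {s c : k} (hwr : A.WeakRightDistrib)
    (hla : A.LeftAlt) (hs : A.t a = s • A.one) (hc : A.n a = c • A.one)
    (hab : A.mul a b = A.one) : c • b = A.conj a := by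
  have h : a = s • A.one - c • b := by
    calc a = A.mul a (A.mul a b) := by rw [hab, A.mul_one]
      _ = A.mul (s • a - c • A.one) b := by rw [hla, hwr.mul_self_eq hs hc]
      _ = s • A.one - c • b := by
        rw [sub_eq_neg_add, ← neg_smul, hwr.mul_smul_one_add, A.smul_mul, hab, neg_smul,
          neg_add_eq_sub]
  rw [conj_eq_sub_of_t_eq hs, h, sub_sub_cancel]

theorem Anisotropic.ne_zero_of_n_eq {a : K} {c : k} (haniso : A.Anisotropic) (ha : a ≠ 0)
    (hc : A.n a = c • A.one) : c ≠ 0 := by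
  rintro rfl
  exact haniso a ha (by rw [hc, zero_smul])

end ConjAlg

theorem stmt2_general {k : Type*} [Field k] {K : Type*} [AddCommGroup K] [Module k K] (A : ConjAlg k K)
    (hwr : A.WeakRightDistrib) (hla : A.LeftAlt)
    (ht : A.TraceKValued)
    (haniso : A.Anisotropic) (hsym : A.NormSymmetric) :
    ∀ a : K, a ≠ 0 → ∀ c : k, A.n a = c • A.one →
      A.mul a (c⁻¹ • A.conj a) = A.one ∧
      A.mul (c⁻¹ • A.conj a) a = A.one ∧
      ∀ b : K, A.mul a b = A.one ∧ A.mul b a = A.one → b = c⁻¹ • A.conj a := by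
  intro a ha c hc
  have hc0 : c ≠ 0 := haniso.ne_zero_of_n_eq ha hc
  have hcancel : ∀ x : K, c⁻¹ • c • x = x := fun x => inv_smul_smul₀ hc0 x
  obtain ⟨s, hs⟩ := ht a
  refine ⟨?_, ?_, fun b ⟨hab, _⟩ => ?_⟩
  · rw [A.mul_smul, ConjAlg.mul_conj_eq_n hsym, hc, hcancel]
  · rw [A.smul_mul, ← ConjAlg.n, hc, hcancel]
  · rw [← ConjAlg.smul_eq_conj_of_mul_eq_one hwr hla hs hc hab, hcancel]

theorem stmt2 {k : Type*} [Field k] {K : Type*} [AddCommGroup K] [Module k K] (A : ConjAlg k K)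
    (hwr : A.WeakRightDistrib) (hla : A.LeftAlt)
    (ht : A.TraceKValued) (hn : A.NormKValued)
    (haniso : A.Anisotropic) (hsym : A.NormSymmetric) :
    ∀ a : K, a ≠ 0 → ∀ c : k, A.n a = c • A.one →
      A.mul a (c⁻¹ • A.conj a) = A.one ∧
      A.mul (c⁻¹ • A.conj a) a = A.one ∧
      ∀ b : K, A.mul a b = A.one ∧ A.mul b a = A.one → b = c⁻¹ • A.conj a :=
  stmt2_general A hwr hla ht haniso hsym
end

section
/- Let K be a weakly right distributive, left alternative k-algebra with conjugation, with k-valued trace and norm. If there exists a k-linear map T : K → K restricting to the identity on k and satisfying T((a(bc))‾) = T(c̄·(b̄·ā)) for all a,b,c ∈ K, then the norm is multiplicative: n(ab) = n(a)n(b) for all a,b ∈ K. -/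
namespace ConjAlg

variable {k : Type*} [Field k] {K : Type*} [AddCommGroup K] [Module k K] (A : ConjAlg k K)

theorem conj_smul_one (c : k) : A.conj (c • A.one) = c • A.one := by
  rw [map_smul, A.conj_one]

theorem conj_eq_of_t_eq {x : K} {c : k} (hc : A.t x = c • A.one) :
    A.conj x = c • A.one - x := by
  rw [← hc, t, add_sub_cancel_left]

theorem mul_conj_left_of_t_eq (hwr : A.WeakRightDistrib) {x : K} {c : k}
    (hc : A.t x = c • A.one) (y : K) :
    A.mul (A.conj x) y = c • y - A.mul x y := by
  rw [A.conj_eq_of_t_eq hc, sub_eq_add_neg, hwr, A.smul_mul, A.one_mul, ← neg_one_smul k x,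
    A.smul_mul, neg_one_smul, ← sub_eq_add_neg]

/-- The Cayley–Hamilton relation `x² = t(x) x - n(x)`. -/
theorem mul_self_of_t_eq_of_n_eq (hwr : A.WeakRightDistrib) {x : K} {c ν : k}
    (hc : A.t x = c • A.one) (hν : A.n x = ν • A.one) :
    A.mul x x = c • x - ν • A.one := by
  rw [n, A.mul_conj_left_of_t_eq hwr hc] at hν
  rw [← hν, sub_sub_cancel]

theorem conj_mul_mul_of_n_eq (hwr : A.WeakRightDistrib) (hla : A.LeftAlt)
    {x : K} (hx : A.InK (A.t x)) {ν : k} (hν : A.n x = ν • A.one) (y : K) :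
    A.mul (A.conj x) (A.mul x y) = ν • y := by
  obtain ⟨c, hc⟩ := hx
  rw [A.mul_conj_left_of_t_eq hwr hc, hla, A.mul_self_of_t_eq_of_n_eq hwr hc hν,
    sub_eq_neg_add (c • x), ← neg_smul, hwr, A.smul_mul, A.smul_mul, A.one_mul, neg_smul]
  abel

end ConjAlg

theorem stmt7 {k : Type*} [Field k] {K : Type*} [AddCommGroup K] [Module k K] (A : ConjAlg k K)
    (hwr : A.WeakRightDistrib) (hla : A.LeftAlt)
    (ht : A.TraceKValued) (hn : A.NormKValued)
    (T : K →ₗ[k] K)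
    (hTk : ∀ c : k, T (c • A.one) = c • A.one)
    (hT : ∀ a b c : K,
      T (A.conj (A.mul a (A.mul b c))) =
        T (A.mul (A.conj c) (A.mul (A.conj b) (A.conj a)))) :
    ∀ a b : K, A.n (A.mul a b) = A.mul (A.n a) (A.n b) := by
  intro a b
  obtain ⟨na, hna⟩ := hn a
  obtain ⟨nb, hnb⟩ := hn b
  obtain ⟨m, hm⟩ := hn (A.mul a b)
  -- On the triple `(conj (ab), a, b)` the left side of `hT` is `T (conj n(ab)) = n(ab)`, while
  -- the right side is `T (b̄ (ā (ab))) = T (b̄ (n(a) b)) = n(a) n(b)`.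
  have hT' := hT (A.conj (A.mul a b)) a b
  have hlhs : A.mul (A.conj (A.mul a b)) (A.mul a b) = m • A.one := hm
  have hrhs : A.mul (A.conj b) (A.mul (A.conj a) (A.mul a b)) = (na * nb) • A.one := by
    rw [A.conj_mul_mul_of_n_eq hwr hla (ht a) hna, A.mul_smul, ← ConjAlg.n, hnb, smul_smul]
  rw [hlhs, A.conj_smul_one, hTk, A.conj_conj, hrhs, hTk] at hT'
  rw [hm, hna, hnb, A.smul_mul, A.mul_smul, A.one_mul, smul_smul, hT']
end

section
/- Let K be a k-algebra with conjugation and D ∈ k. The conjugation on K is an involution (i.e., (ab)‾ = b̄·ā for all a,b ∈ K) if and only if the conjugation on the Cayley-Dickson double K ×_D K is an involution. -/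
/-- The Cayley-Dickson double multiplication: `(a,b)(c,d) = (ac + D·d·b̄, ā·d + c·b)`. -/
def cdMul {k : Type*} [Field k] {K : Type*} [AddCommGroup K] [Module k K]
    (A : ConjAlg k K) (D : k) (x y : K × K) : K × K :=
  (A.mul x.1 y.1 + D • A.mul y.2 (A.conj x.2),
   A.mul (A.conj x.1) y.2 + A.mul y.1 x.2)

/-- The Cayley-Dickson double conjugation: `(a,b)‾ = (ā, −b)`. -/
def cdConj {k : Type*} [Field k] {K : Type*} [AddCommGroup K] [Module k K]
    (A : ConjAlg k K) (x : K × K) : K × K :=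
  (A.conj x.1, -x.2)

/-! No distributivity is needed: `k`-homogeneity of the multiplication makes it commute with
negation, and that is all the doubling uses. For `x = (a,b)`, `y = (c,d)` the first components
of both sides agree by the involution law applied to `ac` and `d b̄`, the second components are
`-(ā d + c b)` on both sides. Conversely, `K × 0` is a copy of `K` closed under the doubled
multiplication and conjugation. -/

namespace ConjAlg

variable {k : Type*} [Field k] {K : Type*} [AddCommGroup K] [Module k K] (A : ConjAlg k K)

theorem mul_zero (x : K) : A.mul x 0 = 0 := by
  simpa using A.mul_smul 0 x 0

theorem neg_mul (x y : K) : A.mul (-x) y = -A.mul x y := by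
  rw [← neg_one_smul k x, A.smul_mul, neg_one_smul]

theorem mul_neg (x y : K) : A.mul x (-y) = -A.mul x y := by
  rw [← neg_one_smul k y, A.mul_smul, neg_one_smul]

end ConjAlg

section CayleyDickson

variable {k : Type*} [Field k] {K : Type*} [AddCommGroup K] [Module k K] (A : ConjAlg k K)

theorem cdMul_inl (D : k) (a b : K) : cdMul A D (a, 0) (b, 0) = (A.mul a b, 0) := by
  simp [cdMul, A.mul_zero]

theorem cdConj_inl (a : K) : cdConj A (a, 0) = (A.conj a, 0) := by
  simp [cdConj]

variable {A}

theorem cdConj_cdMul_of_conj_mul (h : ∀ a b : K, A.conj (A.mul a b) = A.mul (A.conj b) (A.conj a))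
    (D : k) (x y : K × K) : cdConj A (cdMul A D x y) = cdMul A D (cdConj A y) (cdConj A x) := by
  simp only [cdMul, cdConj, Prod.mk.injEq, map_add, map_smul, map_neg, h, A.conj_conj,
    A.neg_mul, A.mul_neg, neg_neg, neg_add]
  exact ⟨trivial, by abel⟩

theorem conj_mul_of_cdConj_cdMul {D : k}
    (h : ∀ x y : K × K, cdConj A (cdMul A D x y) = cdMul A D (cdConj A y) (cdConj A x))
    (a b : K) : A.conj (A.mul a b) = A.mul (A.conj b) (A.conj a) := by
  simpa only [cdMul_inl, cdConj_inl, Prod.mk.injEq, and_true] using h (a, 0) (b, 0)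

end CayleyDickson

theorem stmt10 {k : Type*} [Field k] {K : Type*} [AddCommGroup K] [Module k K] (A : ConjAlg k K) (D : k) :
    (∀ a b : K, A.conj (A.mul a b) = A.mul (A.conj b) (A.conj a)) ↔
    (∀ x y : K × K, cdConj A (cdMul A D x y) = cdMul A D (cdConj A y) (cdConj A x)) :=
  ⟨fun h => cdConj_cdMul_of_conj_mul h D, conj_mul_of_cdConj_cdMul⟩
end

section
/- Let k be an ordered field and C₁, C₂ ∈ k positive. Then x₁,x₂,x₃,x₄ ∈ k satisfy x₁² + C₁x₂² + C₂x₃² + C₁C₂x₄² = 1 if and only if there exist s₁,s₂,s₃,s₄ ∈ k, not all zero, such that with N = s₁² + C₁s₂² + C₂s₃² + C₁C₂s₄², one has x₁ = (s₁² − C₁s₂² − C₂s₃² − C₁C₂s₄²)/N and xᵢ = 2s₁sᵢ/N for i = 2,3,4. -/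
/-!
Stereographic projection from the point `(-1, 0, 0, 0)` of the quadric
`x₁² + C₁x₂² + C₂x₃² + C₁C₂x₄² = 1`. A point `x ≠ (-1, 0, 0, 0)` of the quadric is recovered
from `s = (1 + x₁, x₂, x₃, x₄)`, at which the form takes the value `2(1 + x₁)`; the point `(-1, 0, 0, 0)` itself
comes from `s = (0, 1, 0, 0)`. Conversely the parametrised point lies on the quadric by the
identity `(s₁² - R)² + 4s₁²R = (s₁² + R)²`, and positive definiteness of the form makes the
denominator nonzero.
-/

namespace QuaternionQuadric

variable {k : Type*}

def quadForm [CommRing k] (C₁ C₂ a b c d : k) : k :=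
  a ^ 2 + C₁ * b ^ 2 + C₂ * c ^ 2 + C₁ * C₂ * d ^ 2

theorem quadForm_eq_zero_iff [CommRing k] [LinearOrder k] [IsStrictOrderedRing k] {C₁ C₂ : k}
    (hC₁ : 0 < C₁) (hC₂ : 0 < C₂) {a b c d : k} :
    quadForm C₁ C₂ a b c d = 0 ↔ a = 0 ∧ b = 0 ∧ c = 0 ∧ d = 0 := by
  have hC : 0 < C₁ * C₂ := mul_pos hC₁ hC₂
  unfold quadForm
  rw [add_eq_zero_iff_of_nonneg (by positivity) (by positivity),
    add_eq_zero_iff_of_nonneg (by positivity) (by positivity),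
    add_eq_zero_iff_of_nonneg (by positivity) (by positivity)]
  simp only [mul_eq_zero, hC₁.ne', hC₂.ne', hC.ne', false_or, pow_eq_zero_iff two_ne_zero]
  tauto

theorem quadForm_one_add_of_quadForm_eq_one [CommRing k] {C₁ C₂ x₁ x₂ x₃ x₄ : k}
    (h : quadForm C₁ C₂ x₁ x₂ x₃ x₄ = 1) :
    quadForm C₁ C₂ (1 + x₁) x₂ x₃ x₄ = 2 * (1 + x₁) := by
  unfold quadForm at *
  linear_combination h

theorem quadForm_stereographic_eq_one [Field k] {C₁ C₂ s₁ s₂ s₃ s₄ : k}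
    (hN : quadForm C₁ C₂ s₁ s₂ s₃ s₄ ≠ 0) :
    let N := quadForm C₁ C₂ s₁ s₂ s₃ s₄
    quadForm C₁ C₂ ((s₁ ^ 2 - C₁ * s₂ ^ 2 - C₂ * s₃ ^ 2 - C₁ * C₂ * s₄ ^ 2) / N)
      (2 * s₁ * s₂ / N) (2 * s₁ * s₃ / N) (2 * s₁ * s₄ / N) = 1 := by
  intro N
  unfold N quadForm at *
  field_simp
  ring

end QuaternionQuadric

open QuaternionQuadric

theorem stmt14 {k : Type*} [Field k] [LinearOrder k] [IsStrictOrderedRing k] (C₁ C₂ : k)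
    (hC₁ : 0 < C₁) (hC₂ : 0 < C₂) (x₁ x₂ x₃ x₄ : k) :
    x₁ ^ 2 + C₁ * x₂ ^ 2 + C₂ * x₃ ^ 2 + C₁ * C₂ * x₄ ^ 2 = 1 ↔
    ∃ s₁ s₂ s₃ s₄ : k, ¬ (s₁ = 0 ∧ s₂ = 0 ∧ s₃ = 0 ∧ s₄ = 0) ∧
      x₁ = (s₁ ^ 2 - C₁ * s₂ ^ 2 - C₂ * s₃ ^ 2 - C₁ * C₂ * s₄ ^ 2) /
        (s₁ ^ 2 + C₁ * s₂ ^ 2 + C₂ * s₃ ^ 2 + C₁ * C₂ * s₄ ^ 2) ∧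
      x₂ = 2 * s₁ * s₂ / (s₁ ^ 2 + C₁ * s₂ ^ 2 + C₂ * s₃ ^ 2 + C₁ * C₂ * s₄ ^ 2) ∧
      x₃ = 2 * s₁ * s₃ / (s₁ ^ 2 + C₁ * s₂ ^ 2 + C₂ * s₃ ^ 2 + C₁ * C₂ * s₄ ^ 2) ∧
      x₄ = 2 * s₁ * s₄ / (s₁ ^ 2 + C₁ * s₂ ^ 2 + C₂ * s₃ ^ 2 + C₁ * C₂ * s₄ ^ 2) := by
  change quadForm C₁ C₂ x₁ x₂ x₃ x₄ = 1 ↔ _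
  constructor
  · intro h
    by_cases hx : x₁ = -1
    · have hrest : quadForm C₁ C₂ 0 x₂ x₃ x₄ = 0 := by
        unfold quadForm at *
        linear_combination h - (x₁ - 1) * hx
      obtain ⟨-, rfl, rfl, rfl⟩ := (quadForm_eq_zero_iff hC₁ hC₂).1 hrest
      exact ⟨0, 1, 0, 0, by simp, by simp [hx, hC₁.ne'], by simp, by simp, by simp⟩
    · have hx₁ : 1 + x₁ ≠ 0 := fun h₀ => hx (by linear_combination h₀)
      have hN := quadForm_one_add_of_quadForm_eq_one h
      unfold quadForm at h hN
      refine ⟨1 + x₁, x₂, x₃, x₄, fun hs => hx₁ hs.1, ?_⟩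
      rw [hN]
      refine ⟨?_, ?_, ?_, ?_⟩ <;> field_simp
      linear_combination h
  · rintro ⟨s₁, s₂, s₃, s₄, hs, rfl, rfl, rfl, rfl⟩
    exact quadForm_stereographic_eq_one (mt (quadForm_eq_zero_iff hC₁ hC₂).1 hs)
end

section
/- Let K be a k-algebra with conjugation that is left alternative, left distributive, weakly right distributive, with k-valued trace and anisotropic k-valued norm, and let D ∈ k. Then the Conway-Smith double K ×^D K is left distributive: x(y+z) = xy + xz for all x,y,z ∈ K ×^D K. -/
open Classical in
/-- The Conway-Smith double multiplication, where `inv` is the inversion map of the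
division algebra `K` (so `inv b = b⁻¹` for nonzero `b`). -/
noncomputable def csMul {k : Type*} [Field k] {K : Type*} [AddCommGroup K] [Module k K]
    (A : ConjAlg k K) (D : k) (inv : K → K) (x y : K × K) : K × K :=
  if x.2 = 0 then (A.mul x.1 y.1, A.mul (A.conj x.1) y.2)
  else (A.mul x.1 y.1 + D • A.conj (A.mul x.2 (A.conj y.2)),
    A.conj (A.mul (A.conj x.2) (A.conj y.1)) +
      A.conj (A.mul (A.conj x.2) (A.conj (A.mul (A.conj x.1)
        (A.conj (A.mul (A.conj (inv x.2)) (A.conj y.2)))))))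

/- `inv` is applied only to `x.2`, so each component of `x * y` is built from `y` by left
multiplications, conjugation and scalar multiplication, all of them additive. -/
theorem csMul_add_right {k : Type*} [Field k] {K : Type*} [AddCommGroup K] [Module k K]
    (A : ConjAlg k K) (hld : A.LeftDistrib) (D : k) (inv : K → K) (x y z : K × K) :
    csMul A D inv x (y + z) = csMul A D inv x y + csMul A D inv x z := by
  unfold csMul
  split_ifs
  · ext <;> simp only [Prod.fst_add, Prod.snd_add, hld _ _ _]
  · ext <;> simp only [Prod.fst_add, Prod.snd_add, hld _ _ _, map_add, smul_add] <;> abel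

theorem stmt15_general {k : Type*} [Field k] {K : Type*} [AddCommGroup K] [Module k K] (A : ConjAlg k K) (D : k)
    (hld : A.LeftDistrib)
    (inv : K → K) :
    ∀ x y z : K × K, csMul A D inv x (y + z) = csMul A D inv x y + csMul A D inv x z :=
  csMul_add_right A hld D inv

theorem stmt15 {k : Type*} [Field k] {K : Type*} [AddCommGroup K] [Module k K] (A : ConjAlg k K) (D : k)
    (hla : A.LeftAlt) (hld : A.LeftDistrib) (hwr : A.WeakRightDistrib)
    (ht : A.TraceKValued) (hn : A.NormKValued) (haniso : A.Anisotropic)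
    (inv : K → K)
    (hinv : ∀ b : K, b ≠ 0 → A.mul b (inv b) = A.one ∧ A.mul (inv b) b = A.one) :
    ∀ x y z : K × K, csMul A D inv x (y + z) = csMul A D inv x y + csMul A D inv x z :=
  stmt15_general A D hld inv
end
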